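/- arXiv:0902.0993 — 10 statements merged into one kernel-verified Lean document; each statement's English description precedes it below -/
import Mathlib

section
/- In a multicube P over V = ∏ M_i (M_i finite ℤ-modules of odd order), with Γ(a) denoting the unique critical vector of the coset a and σ(a) its generating index set (a = Γ(a) + X_{σ(a)}), define Δ(a,b) = (2Γ(a) − Γ(b)) + X_{σ(b)} for b ≤ a (coset containment). Then Δ(a, Δ(a,b)) = b for all b ≤ a. -/
/-- The coset a + X_A, where X_A is the submodule of vectors supported on A. -/
def cosetSet {n : ℕ} {M : Fin n → Type*} [∀ i, AddCommGroup (M i)]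
    (a : ∀ i, M i) (A : Set (Fin n)) : Set (∀ i, M i) :=
  {v | ∀ i ∉ A, v i = a i}

/-- The critical vector Γ of the coset a + X_A: the unique element of the coset
whose support is disjoint from A. -/
noncomputable def gam {n : ℕ} {M : Fin n → Type*} [∀ i, AddCommGroup (M i)]
    (a : ∀ i, M i) (A : Set (Fin n)) : ∀ i, M i :=
  open Classical in fun i => if i ∈ A then 0 else a i

/-- In a multicube, with Δ(a,b) = (2Γ(a) − Γ(b)) + X_{σ(b)} for b ≤ a,
one has Δ(a, Δ(a,b)) = b. -/
theorem multicube_delta_involutive {n : ℕ} {M : Fin n → Type*}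
    [∀ i, AddCommGroup (M i)] [∀ i, Fintype (M i)]
    (hodd : ∀ i, Odd (Fintype.card (M i)))
    (a b : ∀ i, M i) (A B : Set (Fin n))
    (hle : cosetSet b B ⊆ cosetSet a A) :
    cosetSet (2 • gam a A - gam (2 • gam a A - gam b B) B) B = cosetSet b B := by
  have key : ∀ i ∉ B, ((2 • gam a A - gam (2 • gam a A - gam b B) B : ∀ i, M i)) i = b i := by
    intro i hi
    simp [gam, hi]
  ext v
  exact ⟨fun h i hi => (h i hi).trans (key i hi),
         fun h i hi => (h i hi).trans (key i hi).symm⟩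
end

section
/- In a multicube P, if two cosets a and b have a common lower bound c, then Γ(a) + Γ(b) = Γ(a ∧ b) + Γ(a ∨ b), where a ∧ b is the intersection coset and a ∨ b = a + X_{σ(a) ∪ σ(b) ∪ [Γ(a),Γ(b)]}. -/
/-- In a multicube, if two cosets a and b have a common element c, then
Γ(a) + Γ(b) = Γ(a ∧ b) + Γ(a ∨ b), where a ∧ b is the intersection coset
c + X_{A ∩ B} and a ∨ b = Γ(a) + X_{A ∪ B ∪ [Γ(a),Γ(b)]}. -/
theorem multicube_gamma_add {n : ℕ} {M : Fin n → Type*}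
    [∀ i, AddCommGroup (M i)] [∀ i, Fintype (M i)]
    (hodd : ∀ i, Odd (Fintype.card (M i)))
    (a b c : ∀ i, M i) (A B : Set (Fin n))
    (hca : c ∈ cosetSet a A) (hcb : c ∈ cosetSet b B) :
    gam a A + gam b B =
      gam c (A ∩ B) + gam a (A ∪ B ∪ {i | gam a A i ≠ gam b B i}) := by
  funext i
  simp only [Pi.add_apply, gam, cosetSet, Set.mem_setOf_eq] at *
  by_cases hA : i ∈ A <;> by_cases hB : i ∈ B <;>
    simp [hA, hB, Set.mem_inter_iff, Set.mem_union]
  · exact (hcb i hB).symm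
  · exact (hca i hA).symm
  · have hab : a i = b i := by rw [← hca i hA, ← hcb i hB]
    have hc : c i = b i := hcb i hB
    simp [hab, hc, hA, hB, Set.mem_union]
end

section
/- In a multicube P, if a ≤ b (coset containment), define c(a,b) = Γ(a) + X_{σ(a) ∪ (σ(b))ᶜ}. Then b ∧ c(a,b) = a and b ∨ c(a,b) = 1, where 1 is the whole space V. -/
/-- In a multicube, for a ≤ b the relative complement
c(a,b) = Γ(a) + X_{σ(a) ∪ σ(b)ᶜ} satisfies b ∧ c(a,b) = a and b ∨ c(a,b) = 1
(the whole space). -/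
theorem multicube_complement {n : ℕ} {M : Fin n → Type*}
    [∀ i, AddCommGroup (M i)] [∀ i, Fintype (M i)]
    (hodd : ∀ i, Odd (Fintype.card (M i)))
    (a b : ∀ i, M i) (A B : Set (Fin n))
    (hle : cosetSet a A ⊆ cosetSet b B) :
    cosetSet b B ∩ cosetSet (gam a A) (A ∪ Bᶜ) = cosetSet a A ∧
      cosetSet b (B ∪ (A ∪ Bᶜ) ∪ {i | b i ≠ gam a A i}) = Set.univ := by
  have hab : ∀ i ∉ B, a i = b i := fun i hi => hle (fun j _ => rfl) i hi
  constructor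
  · ext v
    simp only [Set.mem_inter_iff, cosetSet, Set.mem_setOf_eq, Set.mem_union,
      Set.mem_compl_iff]
    constructor
    · rintro ⟨h1, h2⟩ i hiA
      by_cases hiB : i ∈ B
      · have := h2 i (by push_neg; exact ⟨hiA, hiB⟩)
        simpa [gam, hiA] using this
      · rw [h1 i hiB, ← hab i hiB]
    · intro h
      refine ⟨fun i hiB => hle h i hiB, fun i hi => ?_⟩
      push_neg at hi
      simp [gam, hi.1, h i hi.1]
  · ext v
    simp only [cosetSet, Set.mem_setOf_eq, Set.mem_univ, iff_true]
    intro i hi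
    simp only [Set.mem_union, Set.mem_compl_iff] at hi
    tauto
end

section
/- In a multicube P, for a ≤ b one has Δ(b,a) = b ∧ Δ(1, c(a,b)), where c(a,b) = Γ(a) + X_{σ(a) ∪ σ(b)ᶜ}, 1 = V, and Δ(1, x) = −Γ(x) + X_{σ(x)}. -/
/-!
Both sides are cosets, so the identity can be checked one coordinate at a time. Outside `B`
the inclusion `a + X_A ⊆ b + X_B` forces `a i = b i`, and on `A \ B` it forces `M i` to be
trivial; on `B \ A` both sides prescribe the coordinate `-a i`, and on `A ∩ B` neither side
constrains it.
-/

section Multicube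

variable {n : ℕ} {M : Fin n → Type*} [∀ i, AddCommGroup (M i)]

@[simp]
lemma gam_apply_of_mem {a : ∀ i, M i} {A : Set (Fin n)} {i : Fin n} (h : i ∈ A) :
    gam a A i = 0 := by
  classical
  simp [gam, h]

@[simp]
lemma gam_apply_of_notMem {a : ∀ i, M i} {A : Set (Fin n)} {i : Fin n} (h : i ∉ A) :
    gam a A i = a i := by
  classical
  simp [gam, h]

lemma cosetSet_eq_inter_of_forall_apply {c b d : ∀ i, M i} {C B D : Set (Fin n)}
    (h : ∀ i (x : M i), (i ∉ C → x = c i) ↔ (i ∉ B → x = b i) ∧ (i ∉ D → x = d i)) :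
    cosetSet c C = cosetSet b B ∩ cosetSet d D := by
  ext v
  simp only [cosetSet, Set.mem_inter_iff, Set.mem_ofPred_eq, ← forall_and]
  exact forall_congr' fun i => h i (v i)

variable {a b : ∀ i, M i} {A B : Set (Fin n)}

lemma apply_eq_of_cosetSet_subset (hle : cosetSet a A ⊆ cosetSet b B) {i : Fin n}
    (hB : i ∉ B) : a i = b i :=
  hle (fun _ _ => rfl) i hB

lemma subsingleton_of_cosetSet_subset (hle : cosetSet a A ⊆ cosetSet b B)
    {i : Fin n} (hA : i ∈ A) (hB : i ∉ B) : Subsingleton (M i) := by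
  suffices ∀ x : M i, x = b i from ⟨fun x y => (this x).trans (this y).symm⟩
  intro x
  have hmem : Function.update a i x ∈ cosetSet a A := fun j hj =>
    Function.update_of_ne (ne_of_mem_of_not_mem hA hj).symm x a
  simpa using hle hmem i hB

end Multicube

theorem multicube_delta_eq_meet_general {n : ℕ} {M : Fin n → Type*}
    [∀ i, AddCommGroup (M i)]
    (a b : ∀ i, M i) (A B : Set (Fin n))
    (hle : cosetSet a A ⊆ cosetSet b B) :
    cosetSet (2 • gam b B - gam a A) A =
      cosetSet b B ∩ cosetSet (-(gam (gam a A) (A ∪ Bᶜ))) (A ∪ Bᶜ) := by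
  refine cosetSet_eq_inter_of_forall_apply fun i x => ?_
  by_cases hA : i ∈ A <;> by_cases hB : i ∈ B
  · simp [hA, hB]
  · have := subsingleton_of_cosetSet_subset hle hA hB
    simp [hA, hB, Subsingleton.elim x (b i)]
  · simp [hA, hB]
  · simp [hA, hB, apply_eq_of_cosetSet_subset hle hB, two_smul]

/-- In a multicube, for a ≤ b one has Δ(b,a) = b ∧ Δ(1, c(a,b)), where
c(a,b) = Γ(a) + X_{σ(a) ∪ σ(b)ᶜ} and Δ(1,x) = −Γ(x) + X_{σ(x)}. -/
theorem multicube_delta_eq_meet {n : ℕ} {M : Fin n → Type*}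
    [∀ i, AddCommGroup (M i)] [∀ i, Fintype (M i)]
    (hodd : ∀ i, Odd (Fintype.card (M i)))
    (a b : ∀ i, M i) (A B : Set (Fin n))
    (hle : cosetSet a A ⊆ cosetSet b B) :
    cosetSet (2 • gam b B - gam a A) A =
      cosetSet b B ∩ cosetSet (-(gam (gam a A) (A ∪ Bᶜ))) (A ∪ Bᶜ) :=
  multicube_delta_eq_meet_general a b A B hle
end

section
/- In a multicube P, if u is nowhere invariant and u ≤ v, then v is nowhere invariant. -/
lemma half_inj {G : Type*} [AddCommGroup G] [Fintype G]
    (h : Odd (Fintype.card G)) {a b : G} (hab : 2 • a = 2 • b) : a = b := by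
  have hd : 2 • (a - b) = 0 := by
    rw [smul_sub, hab, sub_self]
  have h1 : addOrderOf (a - b) ∣ 2 := addOrderOf_dvd_of_nsmul_eq_zero hd
  have h2 : addOrderOf (a - b) ∣ Fintype.card G := addOrderOf_dvd_card
  have hc : Nat.Coprime 2 (Fintype.card G) := Nat.coprime_two_left.mpr h
  have h3 : addOrderOf (a - b) = 1 :=
    Nat.eq_one_of_dvd_coprimes hc h1 h2
  exact sub_eq_zero.mp (AddMonoid.addOrderOf_eq_one_iff.mp h3)

lemma cosetSet_congr {n : ℕ} {M : Fin n → Type*} [∀ i, AddCommGroup (M i)]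
    {a b : ∀ i, M i} {A : Set (Fin n)} (h : ∀ i ∉ A, a i = b i) :
    cosetSet a A = cosetSet b A := by
  ext x
  constructor <;> intro hx i hi
  · rw [hx i hi, h i hi]
  · rw [hx i hi, h i hi]

/-- In a multicube, if u is nowhere invariant and u ≤ v then v is nowhere
invariant. -/
theorem multicube_nowhereInvariant_up {n : ℕ} {M : Fin n → Type*}
    [∀ i, AddCommGroup (M i)] [∀ i, Fintype (M i)]
    (hodd : ∀ i, Odd (Fintype.card (M i)))
    (u v : ∀ i, M i) (A B : Set (Fin n))
    (hni : ¬∃ (w : ∀ i, M i) (C : Set (Fin n)),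
        cosetSet u A ⊂ cosetSet w C ∧
          cosetSet (2 • gam w C - gam u A) A = cosetSet u A)
    (hle : cosetSet u A ⊆ cosetSet v B) :
    ¬∃ (w : ∀ i, M i) (C : Set (Fin n)),
        cosetSet v B ⊂ cosetSet w C ∧
          cosetSet (2 • gam w C - gam v B) B = cosetSet v B := by
  classical
  rintro ⟨w, C, hsub, heq⟩
  apply hni
  have hmem_u : u ∈ cosetSet u A := fun i _ => rfl
  have hmem_v : v ∈ cosetSet v B := fun i _ => rfl
  have huv : ∀ i ∉ B, u i = v i := fun i hi => hle hmem_u i hi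
  have hvw : ∀ i ∉ C, v i = w i := hsub.1 hmem_v
  -- from heq : ∀ i ∉ B, v i = gam w C i
  have hkey : ∀ i ∉ B, v i = gam w C i := by
    intro i hi
    have hv : v ∈ cosetSet (2 • gam w C - gam v B) B := by
      rw [heq]; exact hmem_v
    have h1 := hv i hi
    simp only [Pi.sub_apply, Pi.smul_apply, gam, if_neg hi] at h1
    have h2 : 2 • v i = 2 • gam w C i := by
      rw [two_smul]
      exact eq_sub_iff_add_eq.mp h1
    exact half_inj (hodd i) h2
  -- for i ∈ C \ B, v i = 0
  have hzero : ∀ i ∈ C, i ∉ B → v i = 0 := by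
    intro i hiC hiB
    have := hkey i hiB
    rwa [gam, if_pos hiC] at this
  -- extract witness from strictness
  obtain ⟨x, hxw, hxv⟩ := Set.not_subset.mp hsub.2
  rw [cosetSet, Set.mem_setOf_eq] at hxv
  push_neg at hxv
  obtain ⟨j, hjB, hjx⟩ := hxv
  have hjC : j ∈ C := by
    by_contra hjC
    exact hjx ((hxw j hjC).trans (hvw j hjC).symm)
  have hjA : j ∉ A := by
    intro hjA
    have hy : Function.update u j (x j) ∈ cosetSet u A := by
      intro i hi
      have hij : i ≠ j := by rintro rfl; exact hi hjA
      rw [Function.update_of_ne hij]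
    have := hle hy j hjB
    rw [Function.update_self] at this
    exact hjx this
  refine ⟨u, A ∪ (C \ B), ⟨fun y hy i hi => hy i (fun h => hi (Or.inl h)), ?_⟩, ?_⟩
  · -- not (cosetSet u (A ∪ (C\B)) ⊆ cosetSet u A)
    rw [Set.not_subset]
    refine ⟨Function.update u j (x j), ?_, ?_⟩
    · intro i hi
      have hij : i ≠ j := by rintro rfl; exact hi (Or.inr ⟨hjC, hjB⟩)
      rw [Function.update_of_ne hij]
    · intro hy
      have := hy j hjA
      rw [Function.update_self] at this
      exact hjx (this.trans (huv j hjB))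
  · apply cosetSet_congr
    intro i hi
    simp only [Pi.sub_apply, Pi.smul_apply, gam, if_neg hi]
    by_cases hiC : i ∈ A ∪ (C \ B)
    · have hiCB : i ∈ C ∧ i ∉ B := hiC.resolve_left hi
      have hu0 : u i = 0 := by
        rw [huv i hiCB.2]; exact hzero i hiCB.1 hiCB.2
      rw [if_pos hiC, hu0, smul_zero, sub_zero]
    · rw [if_neg hiC, two_smul]
      abel
end

section
/- Let M be a locally symmetric implication algebra with involution T satisfying (x → T(x)) ∨ y ∨ T(y) = 1, and define Δ(b,a) = b ∧ T(b → a) for a ≤ b. Then for a ≤ b, b → Δ(b,a) = T(b → a). -/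
/-- An implication algebra: a join-semilattice with greatest element 1 in which
every interval [a,1] is a Boolean algebra, with `imp b a` (written b → a) the
relative complement of b over a. It satisfies (x→y)→y = x ⊔ y and
x→(y→z) = y→(x→z), and for a ≤ b, b → a is the complement of b in [a,1]. -/
class ImplicationAlgebra (α : Type*) extends SemilatticeSup α, OrderTop α where
  imp : α → α → α
  imp_imp : ∀ a b : α, imp (imp a b) b = a ⊔ b
  exchange : ∀ a b c : α, imp a (imp b c) = imp b (imp a c)
  imp_glb : ∀ a b : α, a ≤ b → IsGLB {b, imp b a} a
  imp_sup : ∀ a b : α, a ≤ b → b ⊔ imp b a = ⊤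

open ImplicationAlgebra

section Toolkit

variable {α : Type*} [ImplicationAlgebra α]

lemma ia_refl (a : α) : imp a a = ⊤ := by
  have h1 := imp_glb a a le_rfl
  have h2 := imp_sup a a le_rfl
  have ha : a ≤ imp a a := h1.1 (Set.mem_insert_iff.mpr (Or.inr rfl))
  rw [sup_eq_right.mpr ha] at h2
  exact h2

lemma ia_top_imp (a : α) : imp ⊤ a = a := by
  have h1 := imp_glb a ⊤ le_top
  have ha : a ≤ imp ⊤ a := h1.1 (Set.mem_insert_iff.mpr (Or.inr rfl))
  have hb : imp ⊤ a ≤ a := h1.2 (by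
    intro z hz
    rcases Set.mem_insert_iff.mp hz with rfl | h
    · exact le_top
    · simp only [Set.mem_singleton_iff] at h
      exact h ▸ le_rfl)
  exact le_antisymm hb ha

lemma ia_imp_top (a : α) : imp a ⊤ = ⊤ := by
  have h1 : imp (imp a ⊤) ⊤ = ⊤ := by rw [imp_imp]; exact sup_top_eq a
  have h2 : imp a (imp (imp a ⊤) ⊤) = ⊤ := by
    rw [exchange a (imp a ⊤) ⊤]; exact ia_refl _
  rwa [h1] at h2

lemma ia_le_iff (x y : α) : x ≤ y ↔ imp x y = ⊤ := by
  constructor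
  · intro h
    have hy : imp (imp x y) y = y := by rw [imp_imp]; exact sup_eq_right.mpr h
    calc imp x y = imp x (imp (imp x y) y) := by rw [hy]
      _ = imp (imp x y) (imp x y) := exchange x (imp x y) y
      _ = ⊤ := ia_refl _
  · intro h
    have hxy : x ⊔ y = y := by rw [← imp_imp x y, h, ia_top_imp]
    exact le_sup_left.trans_eq hxy

lemma ia_K (a b : α) : a ≤ imp b a := by
  rw [ia_le_iff]
  rw [exchange, ia_refl, ia_imp_top]

lemma ia_anti1 {x y : α} (z : α) (h : x ≤ y) : imp y z ≤ imp x z := by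
  rw [ia_le_iff, exchange, imp_imp, ← ia_le_iff]
  exact h.trans le_sup_left

lemma ia_S (x y : α) : x ⊔ imp x y = ⊤ := by
  have h := imp_sup y (x ⊔ y) le_sup_right
  have h2 : imp (x ⊔ y) y ≤ imp x y := ia_anti1 y le_sup_left
  have h3 : (⊤ : α) ≤ x ⊔ imp x y := by
    rw [← h]
    apply sup_le
    · exact sup_le le_sup_left ((ia_K y x).trans le_sup_right)
    · exact h2.trans le_sup_right
  exact le_antisymm le_top h3

lemma ia_mono2 {x y : α} (c : α) (h : x ≤ y) : imp c x ≤ imp c y := by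
  rw [ia_le_iff]
  have hy : imp (imp y x) x = y := by rw [imp_imp]; exact sup_eq_left.mpr h
  calc imp (imp c x) (imp c y) = imp c (imp (imp c x) y) := (exchange _ _ _).symm
    _ = imp c (imp (imp c x) (imp (imp y x) x)) := by rw [hy]
    _ = imp c (imp (imp y x) (imp (imp c x) x)) := by rw [exchange (imp c x) (imp y x) x]
    _ = imp (imp y x) (imp c (imp (imp c x) x)) := exchange _ _ _
    _ = imp (imp y x) (imp (imp c x) (imp c x)) := by rw [exchange c (imp c x) x]
    _ = imp (imp y x) ⊤ := by rw [ia_refl]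
    _ = ⊤ := ia_imp_top _

lemma ia_sup_imp_le {b c : α} (h : b ⊔ c = ⊤) : imp b c ≤ c := by
  have h1 : imp (imp (imp b c) c) c = imp b c ⊔ c := imp_imp _ _
  rw [imp_imp b c, h, ia_top_imp] at h1
  exact le_sup_left.trans_eq h1.symm

lemma ia_D (p q r : α) : imp p r ≤ imp p q ⊔ r := by
  have ht : p ⊔ (imp p q ⊔ r) = ⊤ := by
    rw [eq_top_iff, ← ia_S p q]
    exact sup_le le_sup_left (le_sup_left.trans le_sup_right)
  exact (ia_mono2 p le_sup_right).trans (ia_sup_imp_le ht)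

lemma ia_E (p q r : α) : imp (imp p q) r ≤ p ⊔ r := by
  rw [ia_le_iff, ← imp_imp p r, exchange, imp_imp, ← ia_le_iff]
  exact ia_D p q r

lemma ia_F (x p q : α) : imp x (p ⊔ q) ≤ p ⊔ imp x q := by
  rw [← imp_imp p q, exchange]
  exact ia_E p q (imp x q)

end Toolkit

/-- In a locally symmetric implication algebra with involution T satisfying
(x → T x) ∨ y ∨ T y = 1, with Δ(b,a) = b ∧ T(b → a) for a ≤ b:
b → Δ(b,a) = T(b → a). -/
theorem locSym_imp_delta {α : Type*} [ImplicationAlgebra α]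
    (T : α → α) (hT2 : ∀ x, T (T x) = x)
    (hThom : ∀ x y : α, T (imp x y) = imp (T x) (T y))
    (hId : ∀ x y : α, imp x (T x) ⊔ y ⊔ T y = ⊤)
    (hloc : ∀ x y : α, y ≤ x → ∃ m, IsGLB {x, T (imp x y)} m)
    (a b d : α) (hab : a ≤ b) (hd : IsGLB {b, T (imp b a)} d) :
    imp b d = T (imp b a) := by
  have hTtop : T (⊤ : α) = ⊤ := by
    have := hThom ⊤ ⊤
    rw [ia_refl, ia_refl] at this
    exact this
  have hTmono : ∀ x y : α, x ≤ y → T x ≤ T y := by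
    intro x y h
    rw [ia_le_iff, ← hThom, (ia_le_iff x y).mp h, hTtop]
  set c := T (imp b a) with hc
  have hdb : d ≤ b := hd.1 (Set.mem_insert _ _)
  have hdc : d ≤ c := hd.1 (Set.mem_insert_iff.mpr (Or.inr rfl))
  have hTa : T a ≤ c := hTmono _ _ (ia_K a b)
  have h1 : imp (T b) b ⊔ T a ⊔ a = ⊤ := by
    have := hId (T b) (T a)
    rwa [hT2, hT2] at this
  have h2 : imp (T b) b ≤ b ⊔ c := by
    calc imp (T b) b ≤ imp (T b) (b ⊔ T a) := ia_mono2 _ le_sup_left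
      _ ≤ b ⊔ imp (T b) (T a) := ia_F _ _ _
      _ = b ⊔ c := by rw [hc, hThom]
  have hbc : b ⊔ c = ⊤ := by
    rw [eq_top_iff, ← h1]
    exact sup_le (sup_le h2 (hTa.trans le_sup_right)) (hab.trans le_sup_left)
  have hB : imp b d ≤ c := (ia_mono2 b hdc).trans (ia_sup_imp_le hbc)
  -- Step A
  set x := imp b (imp c d) with hx
  have hqb : imp x d ≤ b := by
    have h3 : imp b d ≤ x := ia_mono2 b (ia_K d c)
    have h4 : imp x d ≤ imp (imp b d) d := ia_anti1 d h3
    rwa [imp_imp, sup_eq_left.mpr hdb] at h4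
  have hqc : imp x d ≤ c := by
    have h5 : imp c d ≤ x := ia_K (imp c d) b
    have h6 : imp x d ≤ imp (imp c d) d := ia_anti1 d h5
    rwa [imp_imp, sup_eq_left.mpr hdc] at h6
  have hqd : imp x d ≤ d := by
    apply hd.2
    intro z hz
    rcases Set.mem_insert_iff.mp hz with rfl | h
    · exact hqb
    · simp only [Set.mem_singleton_iff] at h
      exact h ▸ hqc
  have hq : imp x d = d := le_antisymm hqd (ia_K d x)
  have hdx : d ≤ x := (ia_K d c).trans (ia_K (imp c d) b)
  have hxt : x = ⊤ := by
    have h7 : imp (imp x d) d = x ⊔ d := imp_imp x d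
    rw [hq, ia_refl] at h7
    rw [sup_eq_left.mpr hdx] at h7
    exact h7.symm
  have hA : c ≤ imp b d := by
    rw [ia_le_iff, exchange]
    exact hxt
  exact le_antisymm hB hA
end

section
/- In a locally symmetric implication algebra M with involution T satisfying (x → T(x)) ∨ y ∨ T(y) = 1, if a ≤ b and T(a) = a, then T(b) = b. -/
open ImplicationAlgebra

/-- In a locally symmetric implication algebra with involution T satisfying
(x → T x) ∨ y ∨ T y = 1: if a ≤ b and T a = a, then T b = b. -/
theorem locSym_fixed_up {α : Type*} [ImplicationAlgebra α]
    (T : α → α) (hT2 : ∀ x, T (T x) = x)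
    (hThom : ∀ x y : α, T (imp x y) = imp (T x) (T y))
    (hId : ∀ x y : α, imp x (T x) ⊔ y ⊔ T y = ⊤)
    (hloc : ∀ x y : α, y ≤ x → ∃ m, IsGLB {x, T (imp x y)} m)
    (a b : α) (hab : a ≤ b) (hfix : T a = a) :
    T b = b := by
  -- basic lemmas
  have htop : ∀ x : α, imp x x = ⊤ := by
    intro x
    have h1 : x ≤ imp x x := (imp_glb x x le_rfl).1 (Or.inr rfl)
    have h2 := imp_sup x x le_rfl
    rwa [sup_eq_right.2 h1] at h2
  have hsup : ∀ x y : α, imp x (x ⊔ y) = ⊤ := by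
    intro x y
    rw [← imp_imp x y, exchange, htop]
  have hle_imp : ∀ x y : α, x ≤ y → imp x y = ⊤ := by
    intro x y h
    rw [← sup_eq_right.2 h]
    exact hsup x y
  have himp_le : ∀ x y : α, imp x y = ⊤ → x ≤ y := by
    intro x y h
    have hlb : imp ⊤ y ∈ lowerBounds ({⊤, imp ⊤ y} : Set α) := by
      intro z hz
      rcases hz with rfl | rfl
      · exact le_top
      · exact le_rfl
    have h2 : imp ⊤ y ≤ y := (imp_glb y ⊤ le_top).2 hlb
    have h3 := imp_imp x y
    rw [h] at h3
    calc x ≤ x ⊔ y := le_sup_left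
    _ = imp ⊤ y := h3.symm
    _ ≤ y := h2
  have hy_le_imp : ∀ x y : α, y ≤ imp x y := by
    intro x y
    apply himp_le
    rw [exchange, htop]
    exact hle_imp x ⊤ le_top
  have hTtop : T ⊤ = ⊤ := by
    have := hThom ⊤ ⊤
    rwa [htop, htop] at this
  have hTmono : ∀ x y : α, x ≤ y → T x ≤ T y := by
    intro x y h
    apply himp_le
    rw [← hThom, hle_imp x y h, hTtop]
  have haTb : a ≤ T b := hfix ▸ hTmono a b hab
  have h1 : imp b (T b) = ⊤ := by
    have h := hId b a
    rw [hfix, sup_assoc, sup_idem,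
      sup_eq_left.2 (haTb.trans (hy_le_imp b (T b)))] at h
    exact h
  have h2 : imp (T b) b = ⊤ := by
    have h := hId (T b) a
    rw [hfix, hT2, sup_assoc, sup_idem,
      sup_eq_left.2 (hab.trans (hy_le_imp (T b) b))] at h
    exact h
  exact le_antisymm (himp_le _ _ h2) (himp_le _ _ h1)
end

section
/- In a locally symmetric implication algebra M with involution T satisfying (x → T(x)) ∨ y ∨ T(y) = 1, with Δ(b,a) = b ∧ T(b→a): if a < b then either Δ(b,a) = a or Δ(b,a) and a have no common lower bound. -/
open ImplicationAlgebra

/-- In a locally symmetric implication algebra with involution T satisfying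
(x → T x) ∨ y ∨ T y = 1, with Δ(b,a) = b ∧ T(b → a): if a < b then either
Δ(b,a) = a or Δ(b,a) and a have no common lower bound. -/
theorem locSym_delta_dichotomy {α : Type*} [ImplicationAlgebra α]
    (T : α → α) (hT2 : ∀ x, T (T x) = x)
    (hThom : ∀ x y : α, T (imp x y) = imp (T x) (T y))
    (hId : ∀ x y : α, imp x (T x) ⊔ y ⊔ T y = ⊤)
    (hloc : ∀ x y : α, y ≤ x → ∃ m, IsGLB {x, T (imp x y)} m)
    (a b d : α) (hab : a < b) (hd : IsGLB {b, T (imp b a)} d) :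
    d = a ∨ ¬∃ p, p ≤ a ∧ p ≤ d := by
  by_cases hp : ∃ p, p ≤ a ∧ p ≤ d
  · left
    obtain ⟨p, hpa, hpd⟩ := hp
    set c := imp b a with hc
    have hglb : IsGLB {b, c} a := imp_glb a b hab.le
    have hac : a ≤ c := hglb.1 (Set.mem_insert_of_mem _ rfl)
    have hdTc : d ≤ T c := hd.1 (Set.mem_insert_of_mem _ rfl)
    -- T preserves sup, hence is monotone
    have Tsup : ∀ x y : α, T (x ⊔ y) = T x ⊔ T y := by
      intro x y
      rw [← imp_imp x y, hThom, hThom, imp_imp]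
    have Tmono : ∀ x y : α, x ≤ y → T x ≤ T y := by
      intro x y h
      have : T x ⊔ T y = T y := by rw [← Tsup, sup_eq_right.mpr h]
      exact sup_eq_right.mp this
    have hpc : p ≤ c := hpa.trans hac
    have hpTc : p ≤ T c := hpd.trans hdTc
    have hTpc : T p ≤ c := by
      have := Tmono p (T c) hpTc
      rwa [hT2] at this
    have hTpTc : T p ≤ T c := Tmono p c hpc
    -- key lemma: if p, T p ≤ y and (x→y) ⊔ p ⊔ T p = ⊤ then x ≤ y
    have key : ∀ x y : α, p ≤ y → T p ≤ y → imp x y ⊔ p ⊔ T p = ⊤ → x ≤ y := by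
      intro x y hpy hTpy htop
      have h1 : imp (x ⊔ y) y = imp x y ⊔ y := by
        conv_lhs => rw [← imp_imp x y]
        rw [imp_imp]
      have h2 : imp (x ⊔ y) y = ⊤ := by
        refine top_le_iff.mp ?_
        rw [← htop, h1]
        exact sup_le (sup_le le_sup_left (hpy.trans le_sup_right))
          (hTpy.trans le_sup_right)
      have hg : IsGLB {x ⊔ y, imp (x ⊔ y) y} y := imp_glb y (x ⊔ y) le_sup_right
      rw [h2] at hg
      have hlb : x ⊔ y ∈ lowerBounds ({x ⊔ y, ⊤} : Set α) := by
        rintro z (rfl | rfl)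
        · exact le_rfl
        · exact le_top
      exact le_sup_left.trans (hg.2 hlb)
    have h1 : T c ≤ c := by
      refine key (T c) c hpc hTpc ?_
      have := hId (T c) p
      rwa [hT2] at this
    have h2 : c ≤ T c := key c (T c) hpTc hTpTc (hId c p)
    have hcT : T c = c := le_antisymm h1 h2
    rw [hcT] at hd
    exact hd.unique hglb
  · exact Or.inr hp
end

section
/- Let Δ be a Delta-operator on an implication algebra M. If u ≤ x ≤ v then Δ(v,x) = x if and only if u ∨ Δ(v,u) ≤ x. In particular the set of fixed points of Δ(v,·) in the interval [u,v] has least element u ∨ Δ(v,u). -/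
open ImplicationAlgebra

/-- A Delta-operator on an implication algebra: a (partial, here totalized)
binary operation Δ(b,a), meaningful for a ≤ b, satisfying the axioms of
Definition 3.1: Δ(b,a) ≤ b; Δ(a,a) = a; Δ(b,Δ(b,a)) = a; monotonicity in the
second argument; Δ(c,Δ(b,a)) = Δ(Δ(c,b),Δ(c,a)); for a < b either Δ(b,a) = a
or Δ(b,a) and a have no lower bound; and Δ(b,a) = b ∧ Δ(1, b → a). -/
structure IsDeltaOperator {α : Type*} [ImplicationAlgebra α] (D : α → α → α) : Prop where
  delta_le : ∀ a b : α, a ≤ b → D b a ≤ b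
  delta_refl : ∀ a : α, D a a = a
  delta_delta : ∀ a b : α, a ≤ b → D b (D b a) = a
  delta_mono : ∀ a b c : α, a ≤ b → b ≤ c → D c a ≤ D c b
  delta_comm : ∀ a b c : α, a ≤ b → b ≤ c → D c (D b a) = D (D c b) (D c a)
  delta_dichot : ∀ a b : α, a < b → D b a = a ∨ ¬∃ p, p ≤ a ∧ p ≤ D b a
  delta_meet : ∀ a b : α, a ≤ b → IsGLB {b, D ⊤ (imp b a)} (D b a)

/-- For a Delta-operator Δ on an implication algebra: if u ≤ x ≤ v then
Δ(v,x) = x iff u ∨ Δ(v,u) ≤ x; in particular u ∨ Δ(v,u) is the least fixed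
point of Δ(v,·) in [u,v]. -/
theorem delta_fixed_iff {α : Type*} [ImplicationAlgebra α]
    (D : α → α → α) (hD : IsDeltaOperator D) (u v : α) (huv : u ≤ v) :
    (∀ x : α, u ≤ x → x ≤ v → (D v x = x ↔ u ⊔ D v u ≤ x)) ∧
      IsLeast {x : α | u ≤ x ∧ x ≤ v ∧ D v x = x} (u ⊔ D v u) := by
  set m := u ⊔ D v u with hm
  have hmv : m ≤ v := sup_le huv (hD.delta_le u v huv)
  have h1 : u ≤ D v m := by
    have := hD.delta_mono (D v u) m v le_sup_right hmv
    rwa [hD.delta_delta u v huv] at this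
  have h2 : D v u ≤ D v m := hD.delta_mono u m v le_sup_left hmv
  have hle : m ≤ D v m := sup_le h1 h2
  have hfix : D v m = m := by
    have h3 : D v m ≤ D v (D v m) := hD.delta_mono m (D v m) v hle (hD.delta_le m v hmv)
    rw [hD.delta_delta m v hmv] at h3
    exact le_antisymm h3 hle
  have key : ∀ x : α, u ≤ x → x ≤ v → (D v x = x ↔ m ≤ x) := by
    intro x hux hxv
    constructor
    · intro hx
      have := hD.delta_mono u x v hux hxv
      rw [hx] at this
      exact sup_le hux this
    · intro hmx
      rcases lt_or_eq_of_le hxv with hlt | heq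
      · rcases hD.delta_dichot x v hlt with h | h
        · exact h
        · exfalso
          apply h
          refine ⟨m, hmx, ?_⟩
          have := hD.delta_mono m x v hmx hxv
          rwa [hfix] at this
      · simp [heq, hD.delta_refl]
  exact ⟨key, ⟨le_sup_left, hmv, hfix⟩, fun x ⟨hux, hxv, hx⟩ => (key x hux hxv).mp hx⟩
end

section
/- Let Δ be a Delta-operator on an implication algebra M. An element u is nowhere invariant (there is no v > u with Δ(v,u) = u) if and only if u ∨ Δ(1,u) = 1; moreover if u is nowhere invariant and u ≤ v then v is nowhere invariant. -/
open ImplicationAlgebra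

/-!
If `u ⊔ Δ(1,u) = 1` and `Δ(v,u) = u` with `u < v`, then `u ≤ Δ(1, v → u)` and
`Δ(1,u) ≤ Δ(1, v → u)`, so `Δ(1, v → u) = 1`; since `Δ(1,·)` is an involution fixing `1`,
`v → u = 1`, which forces `v ≤ u`. Conversely, if `x := u ⊔ Δ(1,u) < 1`, then `v := x → u`
lies strictly above `u` and satisfies `v → u = x`; as `u ≤ Δ(1,x)`, `u` is a lower bound of
`v` and `Δ(1, v → u)`, hence `u ≤ Δ(v,u)`, and the dichotomy axiom gives `Δ(v,u) = u`.
Upward propagation is the monotonicity of `Δ(1,·)`.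
-/

namespace ImplicationAlgebra

variable {α : Type*} [ImplicationAlgebra α] {a b : α}

theorem le_imp (h : a ≤ b) : a ≤ imp b a :=
  (imp_glb a b h).1 (by simp)

theorem imp_imp_of_le (h : a ≤ b) : imp (imp b a) a = b := by
  rw [imp_imp, sup_eq_left.mpr h]

theorem le_of_imp_eq_top (h : a ≤ b) (htop : imp b a = ⊤) : b ≤ a :=
  (imp_glb a b h).2 (by simp [lowerBounds, htop])

theorem lt_imp_of_ne_top (h : a ≤ b) (hb : b ≠ ⊤) : a < imp b a := by
  refine (le_imp h).lt_of_ne fun hab => hb ?_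
  simpa [← hab, sup_eq_left.mpr h] using imp_sup a b h

end ImplicationAlgebra

def IsNowhereInvariant {α : Type*} [LT α] (D : α → α → α) (u : α) : Prop :=
  ¬∃ v, u < v ∧ D v u = u

namespace IsDeltaOperator

variable {α : Type*} [ImplicationAlgebra α] {D : α → α → α} (hD : IsDeltaOperator D)
include hD

theorem delta_top_mono {a b : α} (h : a ≤ b) : D ⊤ a ≤ D ⊤ b :=
  hD.delta_mono a b ⊤ h le_top

theorem le_delta_top_of_delta_top_le {a b : α} (h : D ⊤ a ≤ b) : a ≤ D ⊤ b := by
  simpa only [hD.delta_delta a ⊤ le_top] using hD.delta_top_mono h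

theorem eq_top_of_delta_top_eq_top {a : α} (h : D ⊤ a = ⊤) : a = ⊤ := by
  rw [← hD.delta_delta a ⊤ le_top, h, hD.delta_refl]

theorem le_delta_top_imp {a b : α} (h : a ≤ b) : D b a ≤ D ⊤ (imp b a) :=
  (hD.delta_meet a b h).1 (by simp)

theorem le_delta_of_le_delta_top_imp {a b : α} (h : a ≤ b) (ha : a ≤ D ⊤ (imp b a)) :
    a ≤ D b a :=
  (hD.delta_meet a b h).2 (by simp [lowerBounds, h, ha])

theorem delta_eq_of_le_delta {a b : α} (hab : a < b) (h : a ≤ D b a) : D b a = a :=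
  (hD.delta_dichot a b hab).resolve_right (not_not_intro ⟨a, le_rfl, h⟩)

theorem isNowhereInvariant_of_sup_delta_top_eq_top {u : α} (h : u ⊔ D ⊤ u = ⊤) :
    IsNowhereInvariant D u := by
  rintro ⟨v, huv, hfix⟩
  have hu : u ≤ D ⊤ (imp v u) := hfix.symm.le.trans (hD.le_delta_top_imp huv.le)
  have hDu : D ⊤ u ≤ D ⊤ (imp v u) := hD.delta_top_mono (le_imp huv.le)
  have htop : D ⊤ (imp v u) = ⊤ := top_le_iff.mp (h.symm.le.trans (sup_le hu hDu))
  exact huv.not_ge (le_of_imp_eq_top huv.le (hD.eq_top_of_delta_top_eq_top htop))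

theorem sup_delta_top_eq_top_of_isNowhereInvariant {u : α} (h : IsNowhereInvariant D u) :
    u ⊔ D ⊤ u = ⊤ := by
  by_contra hx
  set x := u ⊔ D ⊤ u
  have hux : u ≤ x := le_sup_left
  have huv : u < imp x u := lt_imp_of_ne_top hux hx
  have hu : u ≤ D ⊤ (imp (imp x u) u) := by
    rw [imp_imp_of_le hux]
    exact hD.le_delta_top_of_delta_top_le le_sup_right
  exact h ⟨imp x u, huv,
    hD.delta_eq_of_le_delta huv (hD.le_delta_of_le_delta_top_imp huv.le hu)⟩

theorem isNowhereInvariant_iff {u : α} : IsNowhereInvariant D u ↔ u ⊔ D ⊤ u = ⊤ :=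
  ⟨hD.sup_delta_top_eq_top_of_isNowhereInvariant, hD.isNowhereInvariant_of_sup_delta_top_eq_top⟩

theorem isNowhereInvariant_mono {u v : α} (hu : IsNowhereInvariant D u) (huv : u ≤ v) :
    IsNowhereInvariant D v := by
  rw [hD.isNowhereInvariant_iff] at hu ⊢
  exact top_le_iff.mp (hu.symm.le.trans (sup_le_sup huv (hD.delta_top_mono huv)))

end IsDeltaOperator

/-- For a Delta-operator Δ on an implication algebra: u is nowhere invariant
(no v > u with Δ(v,u) = u) iff u ∨ Δ(1,u) = 1; moreover nowhere invariance
propagates upwards. -/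
theorem nowhereInvariant_iff_and_up {α : Type*} [ImplicationAlgebra α]
    (D : α → α → α) (hD : IsDeltaOperator D) :
    (∀ u : α, (¬∃ v : α, u < v ∧ D v u = u) ↔ u ⊔ D ⊤ u = ⊤) ∧
      (∀ u v : α, (¬∃ w : α, u < w ∧ D w u = u) → u ≤ v →
        ¬∃ w : α, v < w ∧ D w v = v) :=
  ⟨fun _ => hD.isNowhereInvariant_iff, fun _ _ => hD.isNowhereInvariant_mono⟩
end
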